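/- arXiv:2102.13465 — 2 statements merged into one kernel-verified Lean document; each statement's English description precedes it below -/
import Mathlib

section
/- Let φ : U(1) × SU(2) × SU(3) → SU(5) be the homomorphism sending (α, A, B) to the block-diagonal matrix diag(α³A, α⁻²B). Then the kernel of φ is cyclic of order 6, consisting exactly of the elements (α, α⁻³·I₂, α²·I₃) where α ranges over the sixth roots of unity. -/
/-!
If `diag(α³A, α⁻²B) = 1` then `A = α⁻³` and `B = α²` are scalar, and `det A = 1` forces
`α⁶ = 1`; conversely every such triple lies in the kernel. So the projection to `U(1)` is
injective on the kernel, with image the sixth roots of unity, and the kernel is generated by the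
triple over a primitive sixth root of unity.
-/

/-- `SU n` is the special unitary group of `n × n` complex matrices. -/
abbrev SU (n : ℕ) := Matrix.specialUnitaryGroup (Fin n) ℂ

/-- The homomorphism `φ : U(1) × SU(2) × SU(3) → SU(5)` (written with values in
`5 × 5` matrices), `φ(α, A, B) = diag(α³ A, α⁻² B)`. -/
noncomputable def phi (x : Circle × SU 2 × SU 3) : Matrix (Fin 5) (Fin 5) ℂ :=
  Matrix.reindex finSumFinEquiv finSumFinEquiv
    (Matrix.fromBlocks (((x.1 : ℂ) ^ 3) • (x.2.1 : Matrix (Fin 2) (Fin 2) ℂ)) 0 0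
      ((((x.1 : ℂ) ^ 2)⁻¹) • (x.2.2 : Matrix (Fin 3) (Fin 3) ℂ)))

open Matrix

theorem Circle.coe_mem_unitary (u : Circle) : (u : ℂ) ∈ unitary ℂ := by
  simp [Unitary.mem_iff, ← coe_inv_eq_conj]

theorem Matrix.smul_one_mem_specialUnitaryGroup {n R : Type*} [Fintype n] [DecidableEq n]
    [CommRing R] [StarRing R] {u : R} (hu : u ∈ unitary R) (hn : u ^ Fintype.card n = 1) :
    u • (1 : Matrix n n R) ∈ specialUnitaryGroup n R :=
  ⟨Unitary.smul_mem_of_mem hu (one_mem _), by simp [hn]⟩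

theorem Circle.coe_smul_one_mem_specialUnitaryGroup {n : Type*} [Fintype n] [DecidableEq n]
    {u : Circle} (hn : u ^ Fintype.card n = 1) :
    (u : ℂ) • (1 : Matrix n n ℂ) ∈ specialUnitaryGroup n ℂ :=
  smul_one_mem_specialUnitaryGroup u.coe_mem_unitary (by rw [← coe_pow, hn, coe_one])

theorem Matrix.pow_card_eq_one_of_smul_eq_one {n R : Type*} [Fintype n] [DecidableEq n]
    [CommRing R] {c : R} {A : Matrix n n R} (hA : A.det = 1) (h : c • A = 1) :
    c ^ Fintype.card n = 1 := by
  simpa [det_smul, hA] using congrArg det h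

theorem phi_one : phi 1 = 1 := by
  simp [phi, fromBlocks_one]

theorem phi_mul (x y : Circle × SU 2 × SU 3) : phi (x * y) = phi x * phi y := by
  simp only [phi, reindex_apply, submatrix_mul_equiv, fromBlocks_multiply]
  simp [mul_pow, smul_smul, mul_comm]

noncomputable def phiHom : Circle × SU 2 × SU 3 →* Matrix (Fin 5) (Fin 5) ℂ where
  toFun := phi
  map_one' := phi_one
  map_mul' := phi_mul

theorem phi_eq_one_iff_blocks (x : Circle × SU 2 × SU 3) :
    phi x = 1 ↔ ((x.1 : ℂ) ^ 3) • (x.2.1 : Matrix (Fin 2) (Fin 2) ℂ) = 1 ∧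
      ((x.1 : ℂ) ^ 2)⁻¹ • (x.2.2 : Matrix (Fin 3) (Fin 3) ℂ) = 1 := by
  rw [phi, ← Equiv.eq_symm_apply, reindex_symm, reindex_apply, submatrix_one_equiv,
    ← fromBlocks_one, fromBlocks_inj]
  simp

theorem phi_eq_one_iff (x : Circle × SU 2 × SU 3) : phi x = 1 ↔
    ((x.1 : ℂ) ^ 6 = 1 ∧
      (x.2.1 : Matrix (Fin 2) (Fin 2) ℂ) = ((x.1 : ℂ) ^ 3)⁻¹ • 1 ∧
      (x.2.2 : Matrix (Fin 3) (Fin 3) ℂ) = ((x.1 : ℂ) ^ 2) • 1) := by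
  have h3 : (x.1 : ℂ) ^ 3 ≠ 0 := pow_ne_zero _ (Circle.coe_ne_zero _)
  have h2 : (x.1 : ℂ) ^ 2 ≠ 0 := pow_ne_zero _ (Circle.coe_ne_zero _)
  rw [phi_eq_one_iff_blocks, ← eq_inv_smul_iff₀ h3, inv_smul_eq_iff₀ h2]
  refine ⟨fun ⟨hA, hB⟩ ↦ ⟨?_, hA, hB⟩, fun h ↦ h.2⟩
  have hdet : (x.2.1 : Matrix (Fin 2) (Fin 2) ℂ).det = 1 :=
    (mem_specialUnitaryGroup_iff.1 x.2.1.2).2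
  simpa [← pow_mul] using pow_card_eq_one_of_smul_eq_one hdet ((eq_inv_smul_iff₀ h3).1 hA)

theorem injOn_fst_phi_eq_one : Set.InjOn Prod.fst {x : Circle × SU 2 × SU 3 | phi x = 1} := by
  intro x hx y hy hxy
  obtain ⟨-, hxA, hxB⟩ := (phi_eq_one_iff x).1 hx
  obtain ⟨-, hyA, hyB⟩ := (phi_eq_one_iff y).1 hy
  exact Prod.ext hxy (Prod.ext (Subtype.ext (by rw [hxA, hyA, hxy]))
    (Subtype.ext (by rw [hxB, hyB, hxy])))

noncomputable def zeta6 : Circle := Circle.exp (2 * Real.pi / 6)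

theorem isPrimitiveRoot_zeta6 : IsPrimitiveRoot (zeta6 : ℂ) 6 := by
  convert Complex.isPrimitiveRoot_exp 6 (by norm_num) using 1
  rw [zeta6, Circle.coe_exp]
  push_cast
  ring_nf

theorem zeta6_pow_six : zeta6 ^ 6 = 1 :=
  Circle.coe_eq_one.1 isPrimitiveRoot_zeta6.pow_eq_one

noncomputable def phiKerGen : Circle × SU 2 × SU 3 :=
  (zeta6,
    ⟨(((zeta6 ^ 3)⁻¹ : Circle) : ℂ) • 1, Circle.coe_smul_one_mem_specialUnitaryGroup
      (by rw [inv_pow, ← pow_mul, Fintype.card_fin, zeta6_pow_six, inv_one])⟩,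
    ⟨((zeta6 ^ 2 : Circle) : ℂ) • 1, Circle.coe_smul_one_mem_specialUnitaryGroup
      (by rw [← pow_mul, Fintype.card_fin, zeta6_pow_six])⟩)

theorem phi_phiKerGen : phi phiKerGen = 1 :=
  (phi_eq_one_iff _).2 ⟨isPrimitiveRoot_zeta6.pow_eq_one, rfl, rfl⟩

theorem phi_phiKerGen_pow (k : ℕ) : phi (phiKerGen ^ k) = 1 :=
  pow_mem (show phiKerGen ∈ MonoidHom.mker phiHom from phi_phiKerGen) k

/-- The kernel of `φ` consists exactly of the elements `(α, α⁻³·I₂, α²·I₃)` with `α` a sixth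
root of unity, and it is cyclic of order 6. -/
theorem kernel_phi_eq_Z6 :
    (∀ x : Circle × SU 2 × SU 3, phi x = 1 ↔
      ((x.1 : ℂ) ^ 6 = 1 ∧
        (x.2.1 : Matrix (Fin 2) (Fin 2) ℂ) = (((x.1 : ℂ) ^ 3)⁻¹) • (1 : Matrix (Fin 2) (Fin 2) ℂ) ∧
        (x.2.2 : Matrix (Fin 3) (Fin 3) ℂ) = ((x.1 : ℂ) ^ 2) • (1 : Matrix (Fin 3) (Fin 3) ℂ))) ∧
    ∃ g : Circle × SU 2 × SU 3, phi g = 1 ∧ g ^ 6 = 1 ∧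
      (∀ k : ℕ, 0 < k → k < 6 → g ^ k ≠ 1) ∧
      {x | phi x = 1} = {x | ∃ k : ℕ, x = g ^ k} := by
  refine ⟨phi_eq_one_iff, phiKerGen, phi_phiKerGen, ?_, ?_, ?_⟩
  · exact injOn_fst_phi_eq_one (phi_phiKerGen_pow 6) phi_one zeta6_pow_six
  · intro k hk0 hk6 h
    exact isPrimitiveRoot_zeta6.pow_ne_one_of_pos_of_lt hk0.ne' hk6
      (congrArg (fun x : Circle × SU 2 × SU 3 ↦ (x.1 : ℂ)) h)
  · ext x
    refine ⟨fun hx ↦ ?_, fun ⟨k, hk⟩ ↦ hk ▸ phi_phiKerGen_pow k⟩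
    obtain ⟨k, -, hk⟩ := isPrimitiveRoot_zeta6.eq_pow_of_pow_eq_one ((phi_eq_one_iff x).1 hx).1
    exact ⟨k, injOn_fst_phi_eq_one hx (phi_phiKerGen_pow k) (Circle.coe_injective hk).symm⟩
end

section
/- Let V be a vector space with a nonsingular symmetric bilinear form, Cl(V) its Clifford algebra, and α : Cl(V) → Cl(V) the grading automorphism induced by −1 on V. If x ∈ Cl(V) satisfies x·v = v·α(x) for all v ∈ V, then x is a scalar (a multiple of 1). -/
/-!
The twisted commutator `ι v * x - α x * ι v` is the contraction of `x` by the polar form of `v`,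
and for a nondegenerate symmetric form every functional is such a polar form; so `x` is killed by
all contractions. The change-of-form isomorphism `Cl(V) ≃ ⋀ V` commutes with contractions, and on
`⋀ V` the Euler operator `∑ i, eᵢ ∧ (eᵢ* ⌋ ·)` acts on `⋀ᵏ V` as multiplication by `k`. An element
killed by all contractions is killed by the Euler operator, hence, in characteristic zero, lies
in `⋀⁰ V = K`.
-/

open CliffordAlgebra

namespace CliffordAlgebra

variable {R M : Type*} [CommRing R] [AddCommGroup M] [Module R M] {Q : QuadraticForm R M}

theorem ι_mul_sub_involute_mul_ι (v : M) (x : CliffordAlgebra Q) :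
    ι Q v * x - involute x * ι Q v = contractLeft (QuadraticMap.polarBilin Q v) x := by
  induction x using CliffordAlgebra.left_induction with
  | algebraMap r =>
      rw [contractLeft_algebraMap, involute.commutes, Algebra.commutes, sub_self]
  | add x y hx hy =>
      rw [map_add, mul_add, map_add, add_mul, ← hx, ← hy]
      abel
  | ι_mul x m hx =>
      rw [contractLeft_ι_mul, map_mul, involute_ι, QuadraticMap.polarBilin_apply_apply,
        Algebra.smul_def, ← ι_mul_ι_add_swap, ← hx]
      noncomm_ring

theorem contractLeft_polarBilin_eq_zero {x : CliffordAlgebra Q}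
    (hx : ∀ v, x * ι Q v = ι Q v * involute x) (v : M) :
    contractLeft (QuadraticMap.polarBilin Q v) x = 0 := by
  have h := congrArg involute (hx v)
  rw [map_mul, map_mul, involute_ι, involute_involute, mul_neg, neg_mul, neg_inj] at h
  rw [← ι_mul_sub_involute_mul_ι, h, sub_self]

end CliffordAlgebra

namespace ExteriorAlgebra

section Euler

variable {R M I : Type*} [CommRing R] [AddCommGroup M] [Module R M] [Fintype I]

noncomputable def eulerOperator (b : Module.Basis I R M) :
    ExteriorAlgebra R M →ₗ[R] ExteriorAlgebra R M :=
  ∑ i, LinearMap.mulLeft R (ι R (b i)) ∘ₗ contractLeft (b.coord i)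

variable (b : Module.Basis I R M)

theorem eulerOperator_apply (y : ExteriorAlgebra R M) :
    eulerOperator b y = ∑ i, ι R (b i) * contractLeft (b.coord i) y := by
  simp [eulerOperator]

theorem eulerOperator_ι_mul (m : M) (y : ExteriorAlgebra R M) :
    eulerOperator b (ι R m * y) = ι R m * y + ι R m * eulerOperator b y := by
  have hm : ∑ i, b.coord i m • ι R (b i) = ι R m := by
    simp_rw [← map_smul, ← map_sum, Module.Basis.coord_apply, b.sum_repr]
  have hanti : ∀ i, ι R (b i) * ι R m = -(ι R m * ι R (b i)) := fun i =>
    eq_neg_of_add_eq_zero_left (ι_add_mul_swap _ _)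
  calc eulerOperator b (ι R m * y)
      = ∑ i, (b.coord i m • ι R (b i)) * y
          - ∑ i, (ι R (b i) * ι R m) * contractLeft (b.coord i) y := by
        simp only [eulerOperator_apply, contractLeft_ι_mul, mul_sub, Finset.sum_sub_distrib,
          mul_smul_comm, smul_mul_assoc, mul_assoc]
    _ = ι R m * y + ι R m * eulerOperator b y := by
        simp only [← Finset.sum_mul, hm, hanti, neg_mul, Finset.sum_neg_distrib, sub_neg_eq_add,
          eulerOperator_apply, Finset.mul_sum, mul_assoc]

theorem eulerOperator_of_mem_exteriorPower {k : ℕ} {y : ExteriorAlgebra R M}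
    (hy : y ∈ ⋀[R]^k M) :
    eulerOperator b y = k • y := by
  induction hy using Submodule.pow_induction_on_left' with
  | algebraMap r => simp [eulerOperator_apply]
  | add y z k _ _ hy hz => rw [map_add, hy, hz, smul_add]
  | mem_mul m hm k y _ hy =>
      obtain ⟨m, rfl⟩ := hm
      rw [eulerOperator_ι_mul, hy, mul_smul_comm, succ_nsmul']

theorem decompose_eulerOperator (y : ExteriorAlgebra R M) (k : ℕ) :
    (DirectSum.decompose (fun n ↦ ⋀[R]^n M) (eulerOperator b y) k : ExteriorAlgebra R M) =
      k • (DirectSum.decompose (fun n ↦ ⋀[R]^n M) y k : ExteriorAlgebra R M) := by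
  induction y using DirectSum.Decomposition.inductionOn (fun n ↦ ⋀[R]^n M) with
  | zero => simp
  | add y z hy hz =>
      simp only [map_add, DirectSum.decompose_add, DirectSum.add_apply, Submodule.coe_add, hy, hz,
        smul_add]
  | @homogeneous j y =>
      obtain ⟨y, hy⟩ := y
      rw [Submodule.coe_mk, eulerOperator_of_mem_exteriorPower b hy]
      have hjy : j • y ∈ ⋀[R]^j M := Submodule.smul_of_tower_mem _ j hy
      by_cases hjk : j = k
      · subst hjk
        rw [DirectSum.decompose_of_mem_same (fun n ↦ ⋀[R]^n M) hy,
          DirectSum.decompose_of_mem_same (fun n ↦ ⋀[R]^n M) hjy]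
      · rw [DirectSum.decompose_of_mem_ne (fun n ↦ ⋀[R]^n M) hy hjk,
          DirectSum.decompose_of_mem_ne (fun n ↦ ⋀[R]^n M) hjy hjk, smul_zero]

end Euler

variable {K M : Type*} [Field K] [CharZero K] [AddCommGroup M] [Module K M]

theorem mem_exteriorPower_zero_of_eulerOperator_eq_zero {I : Type*} [Fintype I]
    (b : Module.Basis I K M) {y : ExteriorAlgebra K M} (hy : eulerOperator b y = 0) :
    y ∈ ⋀[K]^0 M := by
  have hdecomp : DirectSum.decompose (fun n ↦ ⋀[K]^n M) y =
      DirectSum.of _ 0 (DirectSum.decompose (fun n ↦ ⋀[K]^n M) y 0) := by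
    ext k
    rcases Nat.eq_zero_or_pos k with rfl | hk
    · rw [DirectSum.of_eq_same]
    · have := decompose_eulerOperator b y k
      rw [hy, DirectSum.decompose_zero, DirectSum.zero_apply, ZeroMemClass.coe_zero, eq_comm,
        ← Nat.cast_smul_eq_nsmul K, smul_eq_zero, Nat.cast_eq_zero] at this
      rw [DirectSum.of_eq_of_ne _ _ _ hk.ne', ZeroMemClass.coe_zero]
      exact this.resolve_left hk.ne'
  rw [← (DirectSum.decompose (fun n ↦ ⋀[K]^n M)).symm_apply_apply y, hdecomp,
    DirectSum.decompose_symm_of]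
  exact Submodule.coe_mem _

theorem exists_algebraMap_eq_of_forall_contractLeft_eq_zero [FiniteDimensional K M]
    {y : ExteriorAlgebra K M} (hy : ∀ d : Module.Dual K M, contractLeft d y = 0) :
    ∃ c : K, algebraMap K _ c = y := by
  have hN : eulerOperator (Module.finBasis K M) y = 0 := by
    simp only [eulerOperator_apply, hy, mul_zero, Finset.sum_const_zero]
  exact Submodule.mem_one.mp (mem_exteriorPower_zero_of_eulerOperator_eq_zero _ hN)

end ExteriorAlgebra

theorem LinearMap.BilinForm.polarBilin_toQuadraticMap_surjective {K V : Type*} [Field K]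
    [NeZero (2 : K)] [AddCommGroup V] [Module K V] [FiniteDimensional K V]
    {B : LinearMap.BilinForm K V} (hB : B.IsSymm) (hBnd : B.Nondegenerate) :
    Function.Surjective (QuadraticMap.polarBilin B.toQuadraticMap) := by
  intro d
  refine ⟨(B.toDual hBnd).symm ((2 : K)⁻¹ • d), LinearMap.ext fun w => ?_⟩
  rw [QuadraticMap.polarBilin_apply_apply, LinearMap.BilinMap.polar_toQuadraticMap,
    hB.eq w, LinearMap.BilinForm.apply_toDual_symm_apply, LinearMap.smul_apply, smul_eq_mul,
    ← two_mul, ← mul_assoc, mul_inv_cancel₀ two_ne_zero, one_mul]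

namespace CliffordAlgebra

variable {K V : Type*} [Field K] [CharZero K] [AddCommGroup V] [Module K V]
  [FiniteDimensional K V] {Q : QuadraticForm K V}

theorem exists_algebraMap_eq_of_forall_contractLeft_eq_zero {x : CliffordAlgebra Q}
    (hx : ∀ d : Module.Dual K V, contractLeft d x = 0) : ∃ c : K, algebraMap K _ c = x := by
  let : Invertible (2 : K) := invertibleOfNonzero two_ne_zero
  obtain ⟨c, hc⟩ := ExteriorAlgebra.exists_algebraMap_eq_of_forall_contractLeft_eq_zero
    (y := equivExterior Q x) fun d => by
      rw [equivExterior, changeFormEquiv_apply, ← changeForm_contractLeft, hx, map_zero]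
  refine ⟨c, (equivExterior Q).injective ?_⟩
  rw [← hc, equivExterior, changeFormEquiv_apply, changeForm_algebraMap]

end CliffordAlgebra

/-- Let `V` carry a nonsingular symmetric bilinear form, `Cl(V)` its Clifford algebra, and
`α` the grading automorphism (induced by `−1` on `V`).  If `x ∈ Cl(V)` satisfies
`x·v = v·α(x)` for all `v ∈ V`, then `x` is a scalar. -/
theorem clifford_central_element_is_scalar {K V : Type*} [Field K] [CharZero K]
    [AddCommGroup V] [Module K V] [FiniteDimensional K V]
    (B : LinearMap.BilinForm K V) (hB : B.IsSymm) (hBnd : B.Nondegenerate)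
    (x : CliffordAlgebra B.toQuadraticMap)
    (hx : ∀ v : V, x * ι B.toQuadraticMap v = ι B.toQuadraticMap v * involute x) :
    ∃ c : K, x = algebraMap K (CliffordAlgebra B.toQuadraticMap) c := by
  have hcontr : ∀ d : Module.Dual K V, contractLeft d x = 0 := fun d => by
    obtain ⟨v, rfl⟩ := LinearMap.BilinForm.polarBilin_toQuadraticMap_surjective hB hBnd d
    exact contractLeft_polarBilin_eq_zero hx v
  obtain ⟨c, hc⟩ := exists_algebraMap_eq_of_forall_contractLeft_eq_zero hcontr
  exact ⟨c, hc.symm⟩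
end
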